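/- Let L be an e-cyclic residuated lattice and let X, Y, Z be convex subalgebras of L. Then X ∩ C[Y ∪ Z] = C[(X ∩ Y) ∪ (X ∩ Z)]. (This says that the lattice of convex subalgebras of L, ordered by inclusion, with meet given by intersection and join given by K ∨ K' = C[K ∪ K'], is distributive.) -/

import Mathlib

/-!
For e-cyclic `L`, `C[S]` is the set of those `x` with `u ≤ |x|` for some product `u` of
absolute values of elements of `S`. This set is a convex subalgebra because `|x| |y| |x|` lies
below the absolute values of `x * y`, `x \ y`, `x / y`, `x ⊔ y` and `x ⊓ y`, and it lies in every
convex subalgebra `H ⊇ S` because `u ≤ x ≤ u \ e` with `u, u \ e ∈ H`.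

Now let `x ∈ X` with `u₁ ⋯ uₙ ≤ |x|`, each `uᵢ` the absolute value of an element of `Y ∪ Z`.
Every `uᵢ ∨ |x|` lies between `|x|` and `e`, and between `uᵢ` and `e`, so it belongs to `X ∩ Y`
or to `X ∩ Z`; and as all factors are below `e`,
`(u₁ ∨ |x|) ⋯ (uₙ ∨ |x|) ≤ |x| ∨ u₁ ⋯ uₙ = |x|`.
-/

universe u

/-- A residuated lattice: a lattice-ordered monoid with left and right residuals.
`ldiv x z` is `x \ z` and `rdiv z y` is `z / y`. -/
class ResiduatedLattice (α : Type u) extends Lattice α, Monoid α where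
  ldiv : α → α → α
  rdiv : α → α → α
  mul_le_iff_le_ldiv : ∀ x y z : α, x * y ≤ z ↔ y ≤ ldiv x z
  mul_le_iff_le_rdiv : ∀ x y z : α, x * y ≤ z ↔ x ≤ rdiv z y

namespace ResiduatedLattice

variable {α : Type u} [ResiduatedLattice α]

/-- `L` is e-cyclic if `x \ e = e / x` for all `x`. -/
def ECyclic (α : Type u) [ResiduatedLattice α] : Prop :=
  ∀ x : α, ldiv x 1 = rdiv 1 x

/-- Absolute value: `|x| = x ⊓ (e / x) ⊓ e`. -/
def absv (x : α) : α := x ⊓ rdiv 1 x ⊓ 1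

/-- A convex subalgebra: contains `e`, closed under all the operations, and order-convex. -/
structure IsConvexSubalgebra (H : Set α) : Prop where
  one_mem : (1 : α) ∈ H
  mul_mem : ∀ ⦃x⦄, x ∈ H → ∀ ⦃y⦄, y ∈ H → x * y ∈ H
  sup_mem : ∀ ⦃x⦄, x ∈ H → ∀ ⦃y⦄, y ∈ H → x ⊔ y ∈ H
  inf_mem : ∀ ⦃x⦄, x ∈ H → ∀ ⦃y⦄, y ∈ H → x ⊓ y ∈ H
  ldiv_mem : ∀ ⦃x⦄, x ∈ H → ∀ ⦃y⦄, y ∈ H → ldiv x y ∈ H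
  rdiv_mem : ∀ ⦃x⦄, x ∈ H → ∀ ⦃y⦄, y ∈ H → rdiv x y ∈ H
  convex : ∀ ⦃a⦄, a ∈ H → ∀ ⦃b⦄, b ∈ H → ∀ ⦃x⦄, a ≤ x → x ≤ b → x ∈ H

/-- `C[S]`: the smallest convex subalgebra containing `S`. -/
def convexClosure (S : Set α) : Set α :=
  ⋂₀ {H : Set α | IsConvexSubalgebra H ∧ S ⊆ H}

end ResiduatedLattice

namespace ResiduatedLattice

variable {α : Type u} [ResiduatedLattice α]

theorem le_ldiv_iff {x y z : α} : y ≤ ldiv x z ↔ x * y ≤ z :=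
  (mul_le_iff_le_ldiv x y z).symm

theorem le_rdiv_iff {x y z : α} : x ≤ rdiv z y ↔ x * y ≤ z :=
  (mul_le_iff_le_rdiv x y z).symm

instance : MulLeftMono α where
  elim _ _ _ h := le_ldiv_iff.1 (h.trans (le_ldiv_iff.2 le_rfl))

instance : MulRightMono α where
  elim _ _ _ h := le_rdiv_iff.1 (h.trans (le_rdiv_iff.2 le_rfl))

protected theorem mul_sup (x y z : α) : x * (y ⊔ z) = x * y ⊔ x * z :=
  le_antisymm (le_ldiv_iff.1 (sup_le (le_ldiv_iff.2 le_sup_left) (le_ldiv_iff.2 le_sup_right)))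
    (sup_le (by gcongr; exact le_sup_left) (by gcongr; exact le_sup_right))

protected theorem sup_mul (x y z : α) : (x ⊔ y) * z = x * z ⊔ y * z :=
  le_antisymm (le_rdiv_iff.1 (sup_le (le_rdiv_iff.2 le_sup_left) (le_rdiv_iff.2 le_sup_right)))
    (sup_le (by gcongr; exact le_sup_left) (by gcongr; exact le_sup_right))

theorem sup_mul_sup_le {a x y : α} (ha : a ≤ 1) (hx : x ≤ 1) (hy : y ≤ 1) :
    (a ⊔ x) * (a ⊔ y) ≤ a ⊔ x * y := by
  rw [ResiduatedLattice.sup_mul, ResiduatedLattice.mul_sup, ResiduatedLattice.mul_sup]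
  exact sup_le (sup_le (le_sup_of_le_left (mul_le_of_le_one_right' ha))
      (le_sup_of_le_left (mul_le_of_le_one_right' hy)))
    (sup_le (le_sup_of_le_left (mul_le_of_le_one_left' hx)) le_sup_right)

theorem mul_le_one_comm (hec : ECyclic α) {x y : α} : x * y ≤ 1 ↔ y * x ≤ 1 := by
  rw [← le_ldiv_iff, hec, le_rdiv_iff]

theorem absv_le_self (x : α) : absv x ≤ x := inf_le_left.trans inf_le_left

theorem absv_le_one (x : α) : absv x ≤ 1 := inf_le_right

theorem absv_mul_self_le_one (x : α) : absv x * x ≤ 1 :=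
  le_rdiv_iff.1 (inf_le_left.trans inf_le_right)

theorem self_mul_absv_le_one (hec : ECyclic α) (x : α) : x * absv x ≤ 1 :=
  (mul_le_one_comm hec).1 (absv_mul_self_le_one x)

theorem le_absv_iff {u x : α} : u ≤ absv x ↔ u ≤ x ∧ u * x ≤ 1 ∧ u ≤ 1 := by
  simp only [absv, le_inf_iff, le_rdiv_iff, and_assoc]

theorem absv_of_le_one {x : α} (hx : x ≤ 1) : absv x = x :=
  le_antisymm (absv_le_self x) (le_absv_iff.2 ⟨le_rfl, mul_le_one' hx hx, hx⟩)

theorem inf_absv_le_absv_of_le_of_le {a b x : α} (hax : a ≤ x) (hxb : x ≤ b) :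
    absv a ⊓ absv b ≤ absv x := by
  refine le_absv_iff.2 ⟨inf_le_left.trans ((absv_le_self a).trans hax), ?_,
    inf_le_left.trans (absv_le_one a)⟩
  calc (absv a ⊓ absv b) * x ≤ absv b * b := by gcongr; exact inf_le_right
    _ ≤ 1 := absv_mul_self_le_one b

theorem absv_mul_absv_mul_absv_le_inf (x y : α) :
    absv x * absv y * absv x ≤ absv x ⊓ absv y := by
  refine le_inf ?_ ?_
  · rw [mul_assoc]
    exact mul_le_of_le_one_right' (mul_le_one' (absv_le_one y) (absv_le_one x))
  · exact (mul_le_of_le_one_right' (absv_le_one x)).trans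
      (mul_le_of_le_one_left' (absv_le_one x))

theorem inf_absv_le_absv_sup (x y : α) : absv x ⊓ absv y ≤ absv (x ⊔ y) := by
  refine le_absv_iff.2 ⟨inf_le_left.trans ((absv_le_self x).trans le_sup_left), ?_,
    inf_le_left.trans (absv_le_one x)⟩
  rw [ResiduatedLattice.mul_sup]
  exact sup_le ((mul_le_mul_left inf_le_left x).trans (absv_mul_self_le_one x))
    ((mul_le_mul_left inf_le_right y).trans (absv_mul_self_le_one y))

theorem inf_absv_le_absv_inf (x y : α) : absv x ⊓ absv y ≤ absv (x ⊓ y) := by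
  refine le_absv_iff.2 ⟨le_inf (inf_le_left.trans (absv_le_self x))
    (inf_le_right.trans (absv_le_self y)), ?_, inf_le_left.trans (absv_le_one x)⟩
  calc (absv x ⊓ absv y) * (x ⊓ y) ≤ absv x * x := mul_le_mul' inf_le_left inf_le_left
    _ ≤ 1 := absv_mul_self_le_one x

theorem absv_mul_absv_mul_absv_le_absv_mul (x y : α) :
    absv x * absv y * absv x ≤ absv (x * y) := by
  refine le_absv_iff.2 ⟨?_, ?_, (absv_mul_absv_mul_absv_le_inf x y).trans
    (inf_le_left.trans (absv_le_one x))⟩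
  · calc absv x * absv y * absv x ≤ x * y * 1 := by
          gcongr
          exacts [absv_le_self x, absv_le_self y, absv_le_one x]
      _ = x * y := mul_one _
  · calc absv x * absv y * absv x * (x * y) = absv x * absv y * (absv x * x) * y := by
          simp only [mul_assoc]
      _ ≤ absv x * absv y * 1 * y := by gcongr; exact absv_mul_self_le_one x
      _ = absv x * (absv y * y) := by rw [mul_one, mul_assoc]
      _ ≤ 1 := mul_le_one' (absv_le_one x) (absv_mul_self_le_one y)

theorem absv_mul_absv_mul_absv_le_absv_ldiv (hec : ECyclic α) (x y : α) :
    absv x * absv y * absv x ≤ absv (ldiv x y) := by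
  refine le_absv_iff.2 ⟨le_ldiv_iff.2 ?_, ?_, (absv_mul_absv_mul_absv_le_inf x y).trans
    (inf_le_left.trans (absv_le_one x))⟩
  · calc x * (absv x * absv y * absv x) = x * absv x * absv y * absv x := by
          simp only [mul_assoc]
      _ ≤ 1 * y * 1 := by
          gcongr
          exacts [self_mul_absv_le_one hec x, absv_le_self y, absv_le_one x]
      _ = y := by rw [one_mul, mul_one]
  · calc absv x * absv y * absv x * ldiv x y ≤ 1 * absv y * x * ldiv x y := by
          gcongr
          exacts [absv_le_one x, absv_le_self x]
      _ = absv y * (x * ldiv x y) := by rw [one_mul, mul_assoc]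
      _ ≤ absv y * y := by gcongr; exact le_ldiv_iff.1 le_rfl
      _ ≤ 1 := absv_mul_self_le_one y

theorem absv_mul_absv_mul_absv_le_absv_rdiv (hec : ECyclic α) (x y : α) :
    absv x * absv y * absv x ≤ absv (rdiv x y) := by
  refine le_absv_iff.2 ⟨le_rdiv_iff.2 ?_, (mul_le_one_comm hec).2 ?_,
    (absv_mul_absv_mul_absv_le_inf x y).trans (inf_le_left.trans (absv_le_one x))⟩
  · calc absv x * absv y * absv x * y ≤ x * absv y * 1 * y := by
          gcongr
          exacts [absv_le_self x, absv_le_one x]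
      _ = x * (absv y * y) := by rw [mul_one, mul_assoc]
      _ ≤ x := mul_le_of_le_one_right' (absv_mul_self_le_one y)
  · calc rdiv x y * (absv x * absv y * absv x) ≤ rdiv x y * (1 * y * absv x) := by
          gcongr
          exacts [absv_le_one x, absv_le_self y]
      _ = rdiv x y * y * absv x := by rw [one_mul, mul_assoc]
      _ ≤ x * absv x := by gcongr; exact le_rdiv_iff.1 le_rfl
      _ ≤ 1 := self_mul_absv_le_one hec x

namespace IsConvexSubalgebra

variable {H : Set α}

def toSubmonoid (hH : IsConvexSubalgebra H) : Submonoid α where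
  carrier := H
  mul_mem' := fun hx hy => hH.mul_mem hx hy
  one_mem' := hH.one_mem

theorem absv_mem (hH : IsConvexSubalgebra H) {x : α} (hx : x ∈ H) : absv x ∈ H :=
  hH.inf_mem (hH.inf_mem hx (hH.rdiv_mem hH.one_mem hx)) hH.one_mem

theorem mem_of_absv_le_of_le_one (hH : IsConvexSubalgebra H) {x b : α} (hx : x ∈ H)
    (hxb : absv x ≤ b) (hb : b ≤ 1) : b ∈ H :=
  hH.convex (hH.absv_mem hx) hH.one_mem hxb hb

end IsConvexSubalgebra

theorem convexClosure_subset {S H : Set α} (hH : IsConvexSubalgebra H) (hSH : S ⊆ H) :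
    convexClosure S ⊆ H :=
  Set.sInter_subset_of_mem ⟨hH, hSH⟩

theorem convexClosure_mono {S T : Set α} (hST : S ⊆ T) : convexClosure S ⊆ convexClosure T :=
  fun _ hx H ⟨hH, hTH⟩ => hx H ⟨hH, hST.trans hTH⟩

def absvMonoid (S : Set α) : Submonoid α := Submonoid.closure (absv '' S)

theorem le_one_of_mem_absvMonoid {S : Set α} {u : α} (hu : u ∈ absvMonoid S) : u ≤ 1 := by
  induction hu using Submonoid.closure_induction with
  | mem _ hs => obtain ⟨s, -, rfl⟩ := hs; exact absv_le_one s
  | one => exact le_rfl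
  | mul _ _ _ _ hu hv => exact mul_le_one' hu hv

theorem absvMonoid_le {S H : Set α} (hH : IsConvexSubalgebra H) (hSH : S ⊆ H) :
    absvMonoid S ≤ hH.toSubmonoid :=
  Submonoid.closure_le.2 (Set.image_subset_iff.2 fun _ hs => hH.absv_mem (hSH hs))

def absvDominated (S : Set α) : Set α := {x | ∃ u ∈ absvMonoid S, u ≤ absv x}

section absvDominated

variable {S : Set α}

theorem subset_absvDominated : S ⊆ absvDominated S :=
  fun s hs => ⟨absv s, Submonoid.subset_closure ⟨s, hs, rfl⟩, le_rfl⟩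

theorem absvDominated_subset {H : Set α} (hH : IsConvexSubalgebra H) (hSH : S ⊆ H) :
    absvDominated S ⊆ H := by
  rintro x ⟨u, hu, hux⟩
  obtain ⟨hu_le, hu_mul, -⟩ := le_absv_iff.1 hux
  have huH : u ∈ H := absvMonoid_le hH hSH hu
  exact hH.convex huH (hH.ldiv_mem huH hH.one_mem) hu_le (le_ldiv_iff.2 hu_mul)

theorem binop_mem_absvDominated {f : α → α → α}
    (hf : ∀ x y, absv x * absv y * absv x ≤ absv (f x y)) {x y : α}
    (hx : x ∈ absvDominated S) (hy : y ∈ absvDominated S) : f x y ∈ absvDominated S := by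
  obtain ⟨u, hu, hux⟩ := hx
  obtain ⟨v, hv, hvy⟩ := hy
  exact ⟨u * v * u, mul_mem (mul_mem hu hv) hu,
    (mul_le_mul' (mul_le_mul' hux hvy) hux).trans (hf x y)⟩

theorem isConvexSubalgebra_absvDominated (hec : ECyclic α) (S : Set α) :
    IsConvexSubalgebra (absvDominated S) where
  one_mem := ⟨1, one_mem _, (absv_of_le_one le_rfl).ge⟩
  mul_mem _ hx _ hy := binop_mem_absvDominated absv_mul_absv_mul_absv_le_absv_mul hx hy
  sup_mem _ hx _ hy := binop_mem_absvDominated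
    (fun x y => (absv_mul_absv_mul_absv_le_inf x y).trans (inf_absv_le_absv_sup x y)) hx hy
  inf_mem _ hx _ hy := binop_mem_absvDominated
    (fun x y => (absv_mul_absv_mul_absv_le_inf x y).trans (inf_absv_le_absv_inf x y)) hx hy
  ldiv_mem _ hx _ hy := binop_mem_absvDominated (absv_mul_absv_mul_absv_le_absv_ldiv hec) hx hy
  rdiv_mem _ hx _ hy := binop_mem_absvDominated (absv_mul_absv_mul_absv_le_absv_rdiv hec) hx hy
  convex := by
    rintro a ⟨u, hu, hua⟩ b ⟨v, hv, hvb⟩ x hax hxb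
    refine ⟨u * v, mul_mem hu hv, le_trans ?_ (inf_absv_le_absv_of_le_of_le hax hxb)⟩
    exact le_inf ((mul_le_of_le_one_right' (le_one_of_mem_absvMonoid hv)).trans hua)
      ((mul_le_of_le_one_left' (le_one_of_mem_absvMonoid hu)).trans hvb)

theorem convexClosure_eq_absvDominated (hec : ECyclic α) (S : Set α) :
    convexClosure S = absvDominated S :=
  (convexClosure_subset (isConvexSubalgebra_absvDominated hec S) subset_absvDominated).antisymm
    fun _ hx _ ⟨hH, hSH⟩ => absvDominated_subset hH hSH hx

end absvDominated

theorem exists_mem_absvMonoid_inter_le_sup {X S : Set α} (hX : IsConvexSubalgebra X)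
    (hS : ∀ s ∈ S, ∀ b, absv s ≤ b → b ≤ 1 → b ∈ S) {a : α} (haX : a ∈ X) (ha : a ≤ 1)
    {u : α} (hu : u ∈ absvMonoid S) : ∃ w ∈ absvMonoid (X ∩ S), w ≤ a ⊔ u := by
  induction hu using Submonoid.closure_induction with
  | mem _ hs =>
    obtain ⟨s, hs, rfl⟩ := hs
    have hb : absv s ⊔ a ≤ 1 := sup_le (absv_le_one s) ha
    have hbX : absv s ⊔ a ∈ X := hX.convex haX hX.one_mem le_sup_right hb
    exact ⟨absv s ⊔ a, Submonoid.subset_closure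
      ⟨_, ⟨hbX, hS s hs _ le_sup_left hb⟩, absv_of_le_one hb⟩, (sup_comm _ _).le⟩
  | one => exact ⟨1, one_mem _, le_sup_right⟩
  | mul u v hu hv ihu ihv =>
    obtain ⟨w, hw, hwu⟩ := ihu
    obtain ⟨w', hw', hwv⟩ := ihv
    exact ⟨w * w', mul_mem hw hw', (mul_le_mul' hwu hwv).trans
      (sup_mul_sup_le ha (le_one_of_mem_absvMonoid hu) (le_one_of_mem_absvMonoid hv))⟩

end ResiduatedLattice

open ResiduatedLattice

/-- the lattice of convex subalgebras is distributive. -/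
theorem stmt4 {α : Type u} [ResiduatedLattice α] (hec : ECyclic α)
    (X Y Z : Set α) (hX : IsConvexSubalgebra X) (hY : IsConvexSubalgebra Y)
    (hZ : IsConvexSubalgebra Z) :
    X ∩ convexClosure (Y ∪ Z) = convexClosure ((X ∩ Y) ∪ (X ∩ Z)) := by
  refine subset_antisymm ?_ (Set.subset_inter
    (convexClosure_subset hX (Set.union_subset Set.inter_subset_left Set.inter_subset_left))
    (convexClosure_mono (Set.union_subset_union Set.inter_subset_right Set.inter_subset_right)))
  rintro x ⟨hxX, hx⟩
  rw [convexClosure_eq_absvDominated hec] at hx ⊢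
  obtain ⟨u, hu, hux⟩ := hx
  have hYZ : ∀ s ∈ Y ∪ Z, ∀ b, absv s ≤ b → b ≤ 1 → b ∈ Y ∪ Z := by
    rintro s (hs | hs) b hsb hb
    exacts [Or.inl (hY.mem_of_absv_le_of_le_one hs hsb hb),
      Or.inr (hZ.mem_of_absv_le_of_le_one hs hsb hb)]
  obtain ⟨w, hw, hwu⟩ :=
    exists_mem_absvMonoid_inter_le_sup hX hYZ (hX.absv_mem hxX) (absv_le_one x) hu
  rw [← Set.inter_union_distrib_left]
  exact ⟨w, hw, hwu.trans (sup_le le_rfl hux)⟩
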